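/- Suppose Y ⫫ X | BᵀX (conditional independence given BᵀX), E[X] = 0, Var(X) = Σ is positive definite, and E[X | BᵀX] = Σ B (BᵀΣB)⁻¹ BᵀX (linear conditional mean). Then for any minimizer (α₀, β₀) of L_τ(α,β) = βᵀΣβ + λ E[ρ_τ(Y - α - βᵀX)] with λ > 0, the vector β₀ lies in the column space of B. -/

import Mathlib

open MeasureTheory ProbabilityTheory Matrix

/-!
Put `c = (BᵀSB)⁻¹BᵀSβ₀`, so that `Bc` is the `S`-orthogonal projection of `β₀` onto the column
space of `B`, and `v = β₀ - Bc`; then `BᵀSv = 0` and `β₀ᵀSβ₀ = (Bc)ᵀS(Bc) + vᵀSv`.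
The linear conditional mean gives `E[vᵀX | BᵀX] = vᵀSB(BᵀSB)⁻¹BᵀX = 0`, and `Y ⫫ X | BᵀX`
upgrades this to `E[vᵀX | BᵀX, Y] = 0`. The residual `r = Y - α₀ - (Bc)ᵀX` is a function of
`(BᵀX, Y)`, so convexity of `ρ_τ` gives
`E ρ_τ(Y - α₀ - β₀ᵀX) ≥ E ρ_τ(r) - E[ρ_τ'(r) vᵀX] = E ρ_τ(r)`.
Comparing `(α₀, β₀)` with `(α₀, Bc)` then leaves `vᵀSv ≤ 0`, hence `v = 0`.
-/

/-- The asymmetric least squares (expectile) loss. -/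
noncomputable def alsLoss (τ c : ℝ) : ℝ :=
  τ * (max c 0) ^ 2 + (1 - τ) * (max (-c) 0) ^ 2

noncomputable def alsLossDeriv (τ c : ℝ) : ℝ :=
  2 * τ * max c 0 - 2 * (1 - τ) * max (-c) 0

section AlsLoss

variable {τ : ℝ}

lemma alsLoss_of_nonneg {c : ℝ} (hc : 0 ≤ c) : alsLoss τ c = τ * c ^ 2 := by
  simp [alsLoss, max_eq_left hc, max_eq_right (neg_nonpos.2 hc)]

lemma alsLoss_of_nonpos {c : ℝ} (hc : c ≤ 0) : alsLoss τ c = (1 - τ) * c ^ 2 := by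
  simp [alsLoss, max_eq_right hc, max_eq_left (neg_nonneg.2 hc)]

lemma alsLossDeriv_of_nonneg {c : ℝ} (hc : 0 ≤ c) : alsLossDeriv τ c = 2 * τ * c := by
  simp [alsLossDeriv, max_eq_left hc, max_eq_right (neg_nonpos.2 hc)]

lemma alsLossDeriv_of_nonpos {c : ℝ} (hc : c ≤ 0) : alsLossDeriv τ c = 2 * (1 - τ) * c := by
  simp [alsLossDeriv, max_eq_right hc, max_eq_left (neg_nonneg.2 hc)]

lemma continuous_alsLoss (τ : ℝ) : Continuous (alsLoss τ) := by
  unfold alsLoss; fun_prop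

lemma continuous_alsLossDeriv (τ : ℝ) : Continuous (alsLossDeriv τ) := by
  unfold alsLossDeriv; fun_prop

lemma sq_max_zero_add_mul_sub_le (a b : ℝ) : max b 0 ^ 2 + 2 * max b 0 * (a - b) ≤ max a 0 ^ 2 := by
  rcases le_total 0 a with ha | ha <;> rcases le_total 0 b with hb | hb <;>
    simp only [max_eq_left, max_eq_right, ha, hb] <;> nlinarith [sq_nonneg (a - b)]

lemma norm_alsLoss_le (hτ : τ ∈ Set.Icc (0 : ℝ) 1) (c : ℝ) : ‖alsLoss τ c‖ ≤ c ^ 2 := by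
  obtain ⟨hτ0, hτ1⟩ := hτ
  rcases le_total 0 c with hc | hc
  · rw [alsLoss_of_nonneg hc, Real.norm_of_nonneg (by positivity)]; nlinarith [sq_nonneg c]
  · rw [alsLoss_of_nonpos hc, Real.norm_of_nonneg (by nlinarith [sq_nonneg c])]
    nlinarith [sq_nonneg c]

lemma norm_alsLossDeriv_le (hτ : τ ∈ Set.Icc (0 : ℝ) 1) (c : ℝ) : ‖alsLossDeriv τ c‖ ≤ 2 * ‖c‖ := by
  obtain ⟨hτ0, hτ1⟩ := hτ
  rw [Real.norm_eq_abs, Real.norm_eq_abs]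
  rcases le_total 0 c with hc | hc
  · rw [alsLossDeriv_of_nonneg hc, abs_of_nonneg hc, abs_of_nonneg (by positivity)]; nlinarith
  · rw [alsLossDeriv_of_nonpos hc, abs_of_nonpos hc, abs_of_nonpos (by nlinarith)]; nlinarith

lemma alsLoss_add_alsLossDeriv_mul_le (hτ : τ ∈ Set.Icc (0 : ℝ) 1) (a b : ℝ) :
    alsLoss τ b + alsLossDeriv τ b * (a - b) ≤ alsLoss τ a := by
  obtain ⟨hτ0, hτ1⟩ := hτ
  have hpos := sq_max_zero_add_mul_sub_le a b
  have hneg := sq_max_zero_add_mul_sub_le (-a) (-b)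
  unfold alsLoss alsLossDeriv
  nlinarith [mul_le_mul_of_nonneg_left hpos hτ0, mul_le_mul_of_nonneg_left hneg (sub_nonneg.2 hτ1)]

variable {Ω : Type*} {mΩ : MeasurableSpace Ω} {μ : Measure Ω} {Z : Ω → ℝ}

lemma MeasureTheory.MemLp.integrable_alsLoss (hτ : τ ∈ Set.Icc (0 : ℝ) 1) (hZ : MemLp Z 2 μ) :
    Integrable (fun ω => alsLoss τ (Z ω)) μ :=
  hZ.integrable_sq.mono' ((continuous_alsLoss τ).comp_aestronglyMeasurable hZ.1)
    (.of_forall fun ω => norm_alsLoss_le hτ (Z ω))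

lemma MeasureTheory.MemLp.alsLossDeriv (hτ : τ ∈ Set.Icc (0 : ℝ) 1) (hZ : MemLp Z 2 μ) :
    MemLp (fun ω => alsLossDeriv τ (Z ω)) 2 μ :=
  hZ.of_le_mul ((continuous_alsLossDeriv τ).comp_aestronglyMeasurable hZ.1)
    (.of_forall fun ω => norm_alsLossDeriv_le hτ (Z ω))

lemma integral_alsLoss_le_integral_alsLoss_sub (hτ : τ ∈ Set.Icc (0 : ℝ) 1) {W : Ω → ℝ}
    (hZ : MemLp Z 2 μ) (hW : MemLp W 2 μ)
    (horth : ∫ ω, alsLossDeriv τ (Z ω) * W ω ∂μ = 0) :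
    ∫ ω, alsLoss τ (Z ω) ∂μ ≤ ∫ ω, alsLoss τ (Z ω - W ω) ∂μ := by
  have hZW : Integrable (fun ω => alsLossDeriv τ (Z ω) * W ω) μ :=
    (hZ.alsLossDeriv hτ).integrable_mul hW
  calc ∫ ω, alsLoss τ (Z ω) ∂μ
      = ∫ ω, alsLoss τ (Z ω) - alsLossDeriv τ (Z ω) * W ω ∂μ := by
        rw [integral_sub (hZ.integrable_alsLoss hτ) hZW, horth, sub_zero]
    _ ≤ ∫ ω, alsLoss τ (Z ω - W ω) ∂μ := by
        refine integral_mono ((hZ.integrable_alsLoss hτ).sub hZW)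
          ((hZ.sub hW).integrable_alsLoss hτ) fun ω => ?_
        have := alsLoss_add_alsLossDeriv_mul_le hτ (Z ω - W ω) (Z ω)
        simp only [sub_sub_cancel_left, mul_neg] at this
        linarith

end AlsLoss

section QuadraticForm

variable {R m n : Type*} [CommRing R] [Fintype m] [Fintype n] {S : Matrix n n R}

lemma Matrix.IsSymm.dotProduct_mulVec_comm (hS : S.IsSymm) (u v : n → R) :
    u ⬝ᵥ S *ᵥ v = v ⬝ᵥ S *ᵥ u := by
  rw [dotProduct_mulVec, ← mulVec_transpose, hS.eq, dotProduct_comm]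

lemma Matrix.IsSymm.add_dotProduct_mulVec_add (hS : S.IsSymm) {u v : n → R} (huv : v ⬝ᵥ S *ᵥ u = 0) :
    (u + v) ⬝ᵥ S *ᵥ (u + v) = u ⬝ᵥ S *ᵥ u + v ⬝ᵥ S *ᵥ v := by
  rw [mulVec_add, add_dotProduct, dotProduct_add, dotProduct_add, hS.dotProduct_mulVec_comm u v,
    huv]
  ring

lemma Matrix.IsSymm.dotProduct_mul_mulVec_eq_zero (hS : S.IsSymm) {B : Matrix n m R} {v : n → R}
    (hv : (Bᵀ * S) *ᵥ v = 0) (w : m → R) : v ⬝ᵥ (S * B) *ᵥ w = 0 := by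
  rw [dotProduct_mulVec, ← mulVec_transpose, transpose_mul, hS.eq, hv, zero_dotProduct]

/-- `B ((BᵀSB)⁻¹BᵀS β)` is the `S`-orthogonal projection of `β` onto the column space of `B`. -/
lemma transpose_mul_mulVec_projection [DecidableEq m] {B : Matrix n m R}
    (hB : IsUnit (Bᵀ * S * B).det) (β : n → R) :
    (Bᵀ * S) *ᵥ (B *ᵥ (((Bᵀ * S * B)⁻¹ * Bᵀ * S) *ᵥ β)) = (Bᵀ * S) *ᵥ β := by
  simp only [mulVec_mulVec, ← Matrix.mul_assoc]
  rw [mul_nonsing_inv _ hB, Matrix.one_mul]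

lemma Matrix.IsSymm.mulVec_add_dotProduct_mulVec_add (hS : S.IsSymm) {B : Matrix n m R}
    {v : n → R} (hv : (Bᵀ * S) *ᵥ v = 0) (c : m → R) :
    (B *ᵥ c + v) ⬝ᵥ S *ᵥ (B *ᵥ c + v) = (B *ᵥ c) ⬝ᵥ S *ᵥ (B *ᵥ c) + v ⬝ᵥ S *ᵥ v := by
  refine hS.add_dotProduct_mulVec_add ?_
  rw [mulVec_mulVec]
  exact hS.dotProduct_mul_mulVec_eq_zero hv c

end QuadraticForm

section DotProduct

variable {Ω : Type*} {mΩ : MeasurableSpace Ω} {μ : Measure Ω} {p : ℕ} {X : Ω → Fin p → ℝ}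

lemma MeasureTheory.MemLp.const_dotProduct {q : ENNReal} (hX : MemLp X q μ) (w : Fin p → ℝ) :
    MemLp (fun ω => w ⬝ᵥ X ω) q μ := by
  simpa only [dotProduct] using memLp_finsetSum Finset.univ fun i _ => (hX.eval i).const_mul (w i)

lemma condExp_const_dotProduct (m : MeasurableSpace Ω) (hX : ∀ i, Integrable (fun ω => X ω i) μ)
    (w : Fin p → ℝ) :
    μ[fun ω => w ⬝ᵥ X ω | m] =ᵐ[μ] fun ω => w ⬝ᵥ fun i => μ[fun ω => X ω i | m] ω := by
  have hsum : (fun ω => w ⬝ᵥ X ω) = ∑ i, w i • fun ω => X ω i := by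
    ext ω; simp [dotProduct]
  rw [hsum]
  filter_upwards [condExp_finsetSum (s := Finset.univ) (fun i _ => (hX i).smul (w i)) m,
    ae_all_iff.2 fun i => condExp_smul (m := m) (μ := μ) (w i) fun ω => X ω i] with ω hω hω'
  simp [hω, hω', dotProduct]

lemma condExp_dotProduct_eq_zero_of_condExp_eq_mulVec {d : ℕ} (m : MeasurableSpace Ω)
    (hX : ∀ i, Integrable (fun ω => X ω i) μ) {S : Matrix (Fin p) (Fin p) ℝ} (hS : S.IsSymm)
    {B : Matrix (Fin p) (Fin d) ℝ} (M : Matrix (Fin d) (Fin d) ℝ)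
    (hXm : ∀ i, μ[fun ω => X ω i | m] =ᵐ[μ] fun ω => ((S * B * M * Bᵀ) *ᵥ X ω) i)
    {v : Fin p → ℝ} (hv : (Bᵀ * S) *ᵥ v = 0) :
    μ[fun ω => v ⬝ᵥ X ω | m] =ᵐ[μ] 0 := by
  filter_upwards [condExp_const_dotProduct m hX v, ae_all_iff.2 hXm] with ω hω hXω
  rw [hω, funext hXω, Matrix.mul_assoc (S * B), ← mulVec_mulVec]
  exact hS.dotProduct_mul_mulVec_eq_zero hv _

end DotProduct

section CondIndep

variable {Ω β γ δ : Type*} {mΩ : MeasurableSpace Ω} {μ : Measure Ω}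

lemma ae_norm_condExp_indicator_le_one [IsFiniteMeasure μ] (m : MeasurableSpace Ω) (s : Set Ω) :
    ∀ᵐ ω ∂μ, ‖(μ⟦s | m⟧) ω‖ ≤ 1 := by
  have hs : ∀ᵐ ω ∂μ, |s.indicator (fun _ => (1 : ℝ)) ω| ≤ 1 :=
    .of_forall fun ω => by by_cases hω : ω ∈ s <;> simp [hω]
  simpa using ae_bdd_abs_condExp_of_ae_bdd_abs (m := m) hs

variable [StandardBorelSpace Ω] [IsFiniteMeasure μ] [mβ : MeasurableSpace β]
  [mγ : MeasurableSpace γ] [mδ : MeasurableSpace δ] {X : Ω → γ} {Y : Ω → β} {T : Ω → δ}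

lemma condExp_comap_indicator_preimage_eq_of_condIndepFun {hT : mδ.comap T ≤ mΩ}
    (hX : Measurable X) (hY : Measurable Y) (hCI : CondIndepFun (mδ.comap T) hT Y X μ)
    (hTX : mδ.comap T ≤ mγ.comap X) {A : Set β} (hA : MeasurableSet A) :
    μ⟦Y ⁻¹' A | mγ.comap X⟧ =ᵐ[μ] μ⟦Y ⁻¹' A | mδ.comap T⟧ := by
  have hFm : StronglyMeasurable[mδ.comap T] (μ⟦Y ⁻¹' A | mδ.comap T⟧) := stronglyMeasurable_condExp
  have hXm : mγ.comap X ≤ mΩ := hX.comap_le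
  refine (ae_eq_condExp_of_forall_setIntegral_eq hXm ((integrable_const (1 : ℝ)).indicator (hY hA))
    (fun _ _ _ => integrable_condExp.integrableOn) ?_ (hFm.mono hTX).aestronglyMeasurable).symm
  rintro _ ⟨t, ht, rfl⟩ -
  have hXt := hX ht
  calc ∫ ω in X ⁻¹' t, (μ⟦Y ⁻¹' A | mδ.comap T⟧) ω ∂μ
      = ∫ ω, (μ⟦Y ⁻¹' A | mδ.comap T⟧) ω * (X ⁻¹' t).indicator (fun _ => 1) ω ∂μ := by
        rw [← integral_indicator hXt]
        congr 1 with ω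
        by_cases hω : ω ∈ X ⁻¹' t <;> simp [hω]
    _ = ∫ ω, (μ⟦Y ⁻¹' A | mδ.comap T⟧) ω * (μ⟦X ⁻¹' t | mδ.comap T⟧) ω ∂μ := by
        rw [← integral_condExp hT]
        refine integral_congr_ae ?_
        exact condExp_stronglyMeasurable_mul_of_bound hT hFm
          ((integrable_const (1 : ℝ)).indicator hXt) 1 (ae_norm_condExp_indicator_le_one _ _)
    _ = ∫ ω, (μ⟦Y ⁻¹' A ∩ X ⁻¹' t | mδ.comap T⟧) ω ∂μ :=
        integral_congr_ae ((condIndepFun_iff_condExp_inter_preimage_eq_mul hY hX).1 hCI A t hA ht).symm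
    _ = ∫ ω in X ⁻¹' t, (Y ⁻¹' A).indicator (fun _ => 1) ω ∂μ := by
        rw [integral_condExp hT, ← integral_indicator hXt, Set.indicator_indicator, Set.inter_comm]


lemma setIntegral_inter_preimage_eq_zero_of_condIndepFun {hT : mδ.comap T ≤ mΩ}
    (hX : Measurable X) (hY : Measurable Y) (hCI : CondIndepFun (mδ.comap T) hT Y X μ)
    (hTX : mδ.comap T ≤ mγ.comap X) {h : Ω → ℝ} (hh : Integrable h μ)
    (hhX : StronglyMeasurable[mγ.comap X] h) (hcond : μ[h | mδ.comap T] =ᵐ[μ] 0)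
    {C : Set Ω} (hC : MeasurableSet[mδ.comap T] C) {A : Set β} (hA : MeasurableSet A) :
    ∫ ω in C ∩ Y ⁻¹' A, h ω ∂μ = 0 := by
  have hXm : mγ.comap X ≤ mΩ := hX.comap_le
  set k := C.indicator h
  set f := (Y ⁻¹' A).indicator fun _ => (1 : ℝ)
  have hk : Integrable k μ := hh.indicator (hT _ hC)
  have hf : Integrable f μ := (integrable_const 1).indicator (hY hA)
  have hkf : Integrable (k * f) μ :=
    hk.mul_bdd (c := 1) hf.aestronglyMeasurable (.of_forall fun ω => by
      by_cases hω : ω ∈ Y ⁻¹' A <;> simp [f, hω])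
  have hkT : μ[k | mδ.comap T] =ᵐ[μ] 0 := by
    filter_upwards [condExp_indicator hh hC, hcond] with ω hω hω'
    simp only [k, hω, Pi.zero_apply, Set.indicator_apply_eq_zero]
    exact fun _ => hω'
  calc ∫ ω in C ∩ Y ⁻¹' A, h ω ∂μ
      = ∫ ω, (k * f) ω ∂μ := by
        rw [← integral_indicator ((hT _ hC).inter (hY hA)), ← Set.indicator_indicator]
        congr 1 with ω
        by_cases hωC : ω ∈ C <;> by_cases hωA : ω ∈ Y ⁻¹' A <;> simp [k, f, hωC, hωA]
    _ = ∫ ω, (k * μ⟦Y ⁻¹' A | mγ.comap X⟧) ω ∂μ := by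
        rw [← integral_condExp hXm]
        exact integral_congr_ae
          (condExp_mul_of_stronglyMeasurable_left (hhX.indicator (hTX _ hC)) hkf hf)
    _ = ∫ ω, (μ⟦Y ⁻¹' A | mδ.comap T⟧ * k) ω ∂μ := by
        refine integral_congr_ae ?_
        filter_upwards [condExp_comap_indicator_preimage_eq_of_condIndepFun hX hY hCI hTX hA] with ω hω
        simp [hω, mul_comm]
    _ = ∫ ω, (μ⟦Y ⁻¹' A | mδ.comap T⟧ * μ[k | mδ.comap T]) ω ∂μ := by
        rw [← integral_condExp hT]
        exact integral_congr_ae (condExp_stronglyMeasurable_mul_of_bound hT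
          stronglyMeasurable_condExp hk 1 (ae_norm_condExp_indicator_le_one _ _))
    _ = 0 := integral_eq_zero_of_ae (by filter_upwards [hkT] with ω hω; simp [hω])

lemma condExp_comap_prodMk_eq_zero_of_condIndepFun {hT : mδ.comap T ≤ mΩ}
    (hX : Measurable X) (hY : Measurable Y) (hCI : CondIndepFun (mδ.comap T) hT Y X μ)
    (hTX : mδ.comap T ≤ mγ.comap X) {h : Ω → ℝ} (hh : Integrable h μ)
    (hhX : StronglyMeasurable[mγ.comap X] h) (hcond : μ[h | mδ.comap T] =ᵐ[μ] 0) :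
    μ[h | (mδ.prod mβ).comap fun ω => (T ω, Y ω)] =ᵐ[μ] 0 := by
  have hTY : (mδ.prod mβ).comap (fun ω => (T ω, Y ω)) ≤ mΩ :=
    (MeasurableSpace.comap_prodMk T Y).trans_le (sup_le hT hY.comap_le)
  have hTYm : Measurable fun ω => (T ω, Y ω) := Measurable.of_comap_le hTY
  have hint : ∫ ω, h ω ∂μ = 0 := by
    rw [← integral_condExp hT]
    exact integral_eq_zero_of_ae hcond
  have hpreimage : ∀ D, MeasurableSet D → ∫ ω in (fun ω => (T ω, Y ω)) ⁻¹' D, h ω ∂μ = 0 := by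
    refine fun D hD => MeasurableSpace.induction_on_inter generateFrom_prod.symm isPiSystem_prod
      (by simp) ?_ ?_ ?_ D hD
    · rintro _ ⟨C, hC, A, hA, rfl⟩
      exact setIntegral_inter_preimage_eq_zero_of_condIndepFun hX hY hCI hTX hh hhX hcond
        ⟨C, hC, rfl⟩ hA
    · intro D hD hD0
      have := integral_add_compl (hTYm hD) hh
      rw [hD0, hint, zero_add] at this
      rwa [Set.preimage_compl]
    · intro D hdisj hD hD0
      rw [Set.preimage_iUnion, integral_iUnion (fun i => hTYm (hD i))
        (fun i j hij => (hdisj hij).preimage _) hh.integrableOn]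
      simp [hD0]
  refine (ae_eq_condExp_of_forall_setIntegral_eq hTY hh (fun _ _ _ => integrableOn_zero) ?_
    stronglyMeasurable_zero.aestronglyMeasurable).symm
  rintro _ ⟨D, hD, rfl⟩ -
  simp [hpreimage D hD]

lemma integral_mul_eq_zero_of_condIndepFun {hT : mδ.comap T ≤ mΩ}
    (hX : Measurable X) (hY : Measurable Y) (hCI : CondIndepFun (mδ.comap T) hT Y X μ)
    (hTX : mδ.comap T ≤ mγ.comap X) {h : Ω → ℝ} (hh : MemLp h 2 μ)
    (hhX : StronglyMeasurable[mγ.comap X] h) (hcond : μ[h | mδ.comap T] =ᵐ[μ] 0)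
    {g : δ × β → ℝ} (hg : Measurable g) (hG : MemLp (fun ω => g (T ω, Y ω)) 2 μ) :
    ∫ ω, g (T ω, Y ω) * h ω ∂μ = 0 := by
  have hTY : (mδ.prod mβ).comap (fun ω => (T ω, Y ω)) ≤ mΩ :=
    (MeasurableSpace.comap_prodMk T Y).trans_le (sup_le hT hY.comap_le)
  have hGm : StronglyMeasurable[(mδ.prod mβ).comap fun ω => (T ω, Y ω)] fun ω => g (T ω, Y ω) :=
    (hg.comp (comap_measurable _)).stronglyMeasurable
  rw [← integral_condExp hTY]
  refine integral_eq_zero_of_ae ?_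
  filter_upwards [condExp_mul_of_stronglyMeasurable_left hGm (hG.integrable_mul hh)
    (hh.integrable one_le_two),
    condExp_comap_prodMk_eq_zero_of_condIndepFun hX hY hCI hTX (hh.integrable one_le_two) hhX
      hcond] with ω hω hω'
  exact hω.trans (by simp [hω'])

end CondIndep

theorem stmt_11_general {Ω : Type*} {mΩ : MeasurableSpace Ω} [StandardBorelSpace Ω]
    (μ : Measure Ω) [IsProbabilityMeasure μ]
    (p d : ℕ) (X : Ω → Fin p → ℝ) (Y : Ω → ℝ)
    (hXmeas : Measurable X) (hYmeas : Measurable Y)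
    (hX2 : MemLp X 2 μ) (hY2 : MemLp Y 2 μ)
    (S : Matrix (Fin p) (Fin p) ℝ)
    (hSpd : S.PosDef)
    (B : Matrix (Fin p) (Fin d) ℝ)
    (hBSB : IsUnit (B.transpose * S * B).det)
    (hle : MeasurableSpace.comap (fun ω => B.transpose.mulVec (X ω)) inferInstance ≤ mΩ)
    (hCI : CondIndepFun
      (MeasurableSpace.comap (fun ω => B.transpose.mulVec (X ω)) inferInstance) hle Y X μ)
    (hLCM : ∀ i,
      (μ[fun ω => X ω i |
          MeasurableSpace.comap (fun ω => B.transpose.mulVec (X ω)) inferInstance])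
        =ᵐ[μ] fun ω => (S * B * (B.transpose * S * B)⁻¹ * B.transpose).mulVec (X ω) i)
    (τ lam : ℝ) (hτ : τ ∈ Set.Ioo (0:ℝ) 1) (hlam : 0 < lam)
    (α₀ : ℝ) (β₀ : Fin p → ℝ)
    (hmin : ∀ (α : ℝ) (β : Fin p → ℝ),
      β₀ ⬝ᵥ S.mulVec β₀ + lam * ∫ ω, alsLoss τ (Y ω - α₀ - β₀ ⬝ᵥ X ω) ∂μ ≤
        β ⬝ᵥ S.mulVec β + lam * ∫ ω, alsLoss τ (Y ω - α - β ⬝ᵥ X ω) ∂μ) :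
    ∃ c : Fin d → ℝ, β₀ = B.mulVec c := by
  have hS : S.IsSymm := by simpa [IsHermitian, IsSymm] using hSpd.isHermitian
  have hτ' : τ ∈ Set.Icc (0 : ℝ) 1 := Set.Ioo_subset_Icc_self hτ
  set c := ((Bᵀ * S * B)⁻¹ * Bᵀ * S) *ᵥ β₀
  set v := β₀ - B *ᵥ c
  have hβ₀ : β₀ = B *ᵥ c + v := (add_sub_cancel _ _).symm
  have hv : (Bᵀ * S) *ᵥ v = 0 := by
    rw [mulVec_sub, transpose_mul_mulVec_projection hBSB, sub_self]
  have hfit : ∀ x, (B *ᵥ c) ⬝ᵥ x = c ⬝ᵥ Bᵀ *ᵥ x := fun x => by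
    rw [dotProduct_mulVec, vecMul_transpose]
  have hZ : MemLp (fun ω => Y ω - α₀ - c ⬝ᵥ Bᵀ *ᵥ X ω) 2 μ :=
    (hY2.sub (memLp_const α₀)).sub (by simpa only [hfit] using hX2.const_dotProduct (B *ᵥ c))
  have horth : ∫ ω, alsLossDeriv τ (Y ω - α₀ - c ⬝ᵥ Bᵀ *ᵥ X ω) * (v ⬝ᵥ X ω) ∂μ = 0 :=
    integral_mul_eq_zero_of_condIndepFun hXmeas hYmeas hCI
      ((continuous_const.matrix_mulVec continuous_id).measurable.comp (comap_measurable X)).comap_le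
      (hX2.const_dotProduct v)
      ((continuous_const.dotProduct continuous_id).measurable.comp
        (comap_measurable X)).stronglyMeasurable
      (condExp_dotProduct_eq_zero_of_condExp_eq_mulVec _
        (fun i => (hX2.eval i).integrable one_le_two) hS _ hLCM hv)
      (g := fun ty => alsLossDeriv τ (ty.2 - α₀ - c ⬝ᵥ ty.1))
      ((continuous_alsLossDeriv τ).comp ((continuous_snd.sub continuous_const).sub
        (continuous_const.dotProduct continuous_fst))).measurable (hZ.alsLossDeriv hτ')
  have hloss : ∫ ω, alsLoss τ (Y ω - α₀ - (B *ᵥ c) ⬝ᵥ X ω) ∂μ ≤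
      ∫ ω, alsLoss τ (Y ω - α₀ - β₀ ⬝ᵥ X ω) ∂μ := by
    convert integral_alsLoss_le_integral_alsLoss_sub hτ' hZ (hX2.const_dotProduct v) horth
      using 4 with ω
    · rw [hfit]
    · rw [hβ₀, add_dotProduct, hfit]; ring
  have hvv : v ⬝ᵥ S *ᵥ v ≤ 0 := by
    linarith [hmin α₀ (B *ᵥ c), mul_le_mul_of_nonneg_left hloss hlam.le,
      hβ₀ ▸ hS.mulVec_add_dotProduct_mulVec_add hv c]
  have hv0 : v = 0 := by
    by_contra hne
    simpa using (hSpd.dotProduct_mulVec_pos hne).trans_le hvv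
  exact ⟨c, by rw [hβ₀, hv0, add_zero]⟩

/-- Theorem 1 (population PALS): under conditional independence `Y ⫫ X | BᵀX`,
centered `X` with positive definite covariance `Σ`, and the linear conditional
mean condition `E[X|BᵀX] = ΣB(BᵀΣB)⁻¹BᵀX`, the `β`-component of any minimizer of
`L_τ(α,β) = βᵀΣβ + λ E[ρ_τ(Y - α - βᵀX)]` lies in the column space of `B`. -/
theorem stmt_11 {Ω : Type*} {mΩ : MeasurableSpace Ω} [StandardBorelSpace Ω]
    (μ : Measure Ω) [IsProbabilityMeasure μ]
    (p d : ℕ) (X : Ω → Fin p → ℝ) (Y : Ω → ℝ)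
    (hXmeas : Measurable X) (hYmeas : Measurable Y)
    (hX2 : MemLp X 2 μ) (hY2 : MemLp Y 2 μ)
    (hXmean : ∀ i, ∫ ω, X ω i ∂μ = 0)
    (S : Matrix (Fin p) (Fin p) ℝ)
    (hS : ∀ i j, S i j = ∫ ω, X ω i * X ω j ∂μ)
    (hSpd : S.PosDef)
    (B : Matrix (Fin p) (Fin d) ℝ)
    (hBSB : IsUnit (B.transpose * S * B).det)
    (hle : MeasurableSpace.comap (fun ω => B.transpose.mulVec (X ω)) inferInstance ≤ mΩ)
    (hCI : CondIndepFun
      (MeasurableSpace.comap (fun ω => B.transpose.mulVec (X ω)) inferInstance) hle Y X μ)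
    (hLCM : ∀ i,
      (μ[fun ω => X ω i |
          MeasurableSpace.comap (fun ω => B.transpose.mulVec (X ω)) inferInstance])
        =ᵐ[μ] fun ω => (S * B * (B.transpose * S * B)⁻¹ * B.transpose).mulVec (X ω) i)
    (τ lam : ℝ) (hτ : τ ∈ Set.Ioo (0:ℝ) 1) (hlam : 0 < lam)
    (α₀ : ℝ) (β₀ : Fin p → ℝ)
    (hmin : ∀ (α : ℝ) (β : Fin p → ℝ),
      β₀ ⬝ᵥ S.mulVec β₀ + lam * ∫ ω, alsLoss τ (Y ω - α₀ - β₀ ⬝ᵥ X ω) ∂μ ≤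
        β ⬝ᵥ S.mulVec β + lam * ∫ ω, alsLoss τ (Y ω - α - β ⬝ᵥ X ω) ∂μ) :
    ∃ c : Fin d → ℝ, β₀ = B.mulVec c :=
  stmt_11_general μ p d X Y hXmeas hYmeas hX2 hY2 S hSpd B hBSB hle hCI hLCM τ lam hτ hlam α₀ β₀
    hmin
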